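/- For any connected graph G and any n ≥ 1, pd(G × P_n) ≤ pd(G) + 1, where P_n is the path on n vertices. -/

import Mathlib

open SimpleGraph

/-- Distance from a vertex to a set of vertices: `min {d(v,x) : x ∈ P}`. -/
noncomputable def distToSet {V : Type*} (G : SimpleGraph V) (v : V) (P : Set V) : ℕ :=
  sInf ((G.dist v) '' P)

/-- `S` is a resolving set of `G`. -/
def IsResolvingSet {V : Type*} (G : SimpleGraph V) (S : Set V) : Prop :=
  ∀ u v : V, u ≠ v → ∃ w ∈ S, G.dist u w ≠ G.dist v w

/-- The metric dimension of `G`. -/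
noncomputable def metricDim {V : Type*} (G : SimpleGraph V) : ℕ :=
  sInf {n | ∃ S : Finset V, S.card = n ∧ IsResolvingSet G ↑S}

/-- `Π` is a resolving partition of `G`: a partition of the vertex set such that
distinct vertices have distinct vectors of distances to the parts. -/
def IsResolvingPartition {V : Type*} (G : SimpleGraph V) (Pi : Set (Set V)) : Prop :=
  Setoid.IsPartition Pi ∧
    ∀ u v : V, u ≠ v → ∃ P ∈ Pi, distToSet G u P ≠ distToSet G v P

/-- The partition dimension of `G`. -/
noncomputable def partitionDim {V : Type*} (G : SimpleGraph V) : ℕ :=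
  sInf {n | ∃ Pi : Finset (Set V), Pi.card = n ∧ IsResolvingPartition G ↑Pi}

/-!
Distances in `G □ H` add over the factors, and so do distances to a product set `P ×ˢ T`.
Hence if `Pi` resolves `G` and `z` is a vertex whose distances separate the vertices of `H`
(the end `0` of a path), the layer `univ ×ˢ {z}` separates vertices with different
`H`-coordinates, while the sets `P ×ˢ {z}ᶜ`, `P ∈ Pi`, separate vertices with the same one.
If `H` has a single vertex, `G □ H` is a copy of `G` and the sets `P ×ˢ univ` suffice.
-/

namespace SimpleGraph

variable {V W : Type*} {G : SimpleGraph V} {H : SimpleGraph W}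

lemma dist_boxProd (hG : G.Connected) (hH : H.Connected) (x y : V × W) :
    (G □ H).dist x y = G.dist x.1 y.1 + H.dist x.2 y.2 := by
  simp only [dist, edist_boxProd]
  exact ENat.toNat_add (edist_ne_top_iff_reachable.mpr (hG x.1 y.1))
    (edist_ne_top_iff_reachable.mpr (hH x.2 y.2))

lemma Walk.apply_le_apply_add_length {f : V → ℕ} (hf : ∀ ⦃u v⦄, G.Adj u v → f u ≤ f v + 1)
    {u v : V} (w : G.Walk u v) : f u ≤ f v + w.length := by
  induction w with
  | nil => simp
  | cons h _ ih =>
    have := hf h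
    rw [Walk.length_cons]
    omega

lemma Reachable.apply_le_apply_add_dist {f : V → ℕ}
    (hf : ∀ ⦃u v⦄, G.Adj u v → f u ≤ f v + 1) {u v : V} (h : G.Reachable u v) :
    f u ≤ f v + G.dist u v := by
  obtain ⟨w, hw⟩ := h.exists_walk_length_eq_dist
  exact hw ▸ w.apply_le_apply_add_length hf

lemma pathGraph_dist_zero {m : ℕ} (i : Fin (m + 1)) : (pathGraph (m + 1)).dist i 0 = i := by
  have hconn := pathGraph_connected m
  refine le_antisymm ?_ ?_
  · induction i using Fin.induction with
    | zero => simp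
    | succ i ih =>
      have hadj : (pathGraph (m + 1)).Adj i.succ i.castSucc := by simp [pathGraph_adj]
      calc (pathGraph (m + 1)).dist i.succ 0
          ≤ (pathGraph (m + 1)).dist i.succ i.castSucc + (pathGraph (m + 1)).dist i.castSucc 0 :=
            hconn.dist_triangle
        _ ≤ 1 + i := by rw [dist_eq_one_iff_adj.mpr hadj]; simpa using ih
        _ = i.succ := by simp [add_comm]
  · have hf : ∀ ⦃u v : Fin (m + 1)⦄, (pathGraph (m + 1)).Adj u v → (u : ℕ) ≤ v + 1 := by
      intro u v h
      rw [pathGraph_adj] at h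
      omega
    simpa using (hconn i 0).apply_le_apply_add_dist hf

end SimpleGraph

open SimpleGraph Set

section DistToSet

variable {V W : Type*} {G : SimpleGraph V} {H : SimpleGraph W}

lemma distToSet_le_dist {v x : V} {P : Set V} (hx : x ∈ P) : distToSet G v P ≤ G.dist v x :=
  Nat.sInf_le (mem_image_of_mem _ hx)

lemma exists_dist_eq_distToSet (v : V) {P : Set V} (hP : P.Nonempty) :
    ∃ x ∈ P, G.dist v x = distToSet G v P :=
  Nat.sInf_mem (hP.image _)

lemma distToSet_eq_zero_of_mem {v : V} {P : Set V} (hv : v ∈ P) : distToSet G v P = 0 :=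
  Nat.eq_zero_of_le_zero <| (distToSet_le_dist hv).trans_eq G.dist_self

lemma distToSet_singleton (v x : V) : distToSet G v {x} = G.dist v x := by
  simp [distToSet]

lemma distToSet_boxProd (hG : G.Connected) (hH : H.Connected) (x : V × W) {P : Set V}
    {T : Set W} (hP : P.Nonempty) (hT : T.Nonempty) :
    distToSet (G □ H) x (P ×ˢ T) = distToSet G x.1 P + distToSet H x.2 T := by
  refine le_antisymm ?_ ?_
  · obtain ⟨p, hp, hpd⟩ := exists_dist_eq_distToSet (G := G) x.1 hP
    obtain ⟨t, ht, htd⟩ := exists_dist_eq_distToSet (G := H) x.2 hT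
    calc distToSet (G □ H) x (P ×ˢ T) ≤ (G □ H).dist x (p, t) := distToSet_le_dist ⟨hp, ht⟩
      _ = _ := by rw [dist_boxProd hG hH, hpd, htd]
  · obtain ⟨y, ⟨hy₁, hy₂⟩, hyd⟩ := exists_dist_eq_distToSet (G := G □ H) x (hP.prod hT)
    rw [← hyd, dist_boxProd hG hH]
    exact add_le_add (distToSet_le_dist hy₁) (distToSet_le_dist hy₂)

end DistToSet

namespace Setoid.IsPartition

variable {V W : Type*} {Pi : Set (Set V)}

lemma image_prod_univ [Nonempty W] (hPi : IsPartition Pi) :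
    IsPartition ((· ×ˢ (univ : Set W)) '' Pi) := by
  refine ⟨?_, fun x ↦ ?_⟩
  · rintro ⟨P, hP, hPe⟩
    obtain ⟨v, hv⟩ := nonempty_of_mem_partition hPi hP
    exact eq_empty_iff_forall_notMem.mp hPe (v, Classical.arbitrary W) ⟨hv, mem_univ _⟩
  · obtain ⟨P, ⟨hP, hxP⟩, huniq⟩ := hPi.2 x.1
    refine ⟨P ×ˢ univ, ⟨⟨P, hP, rfl⟩, hxP, mem_univ _⟩, ?_⟩
    rintro _ ⟨⟨Q, hQ, rfl⟩, hxQ, -⟩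
    rw [huniq Q ⟨hQ, hxQ⟩]

lemma insert_univ_prod_singleton [Nonempty V] (hPi : IsPartition Pi) {z : W}
    (hz : ∃ w, w ≠ z) :
    IsPartition (insert (univ ×ˢ {z}) ((· ×ˢ {z}ᶜ) '' Pi)) := by
  refine ⟨?_, fun x ↦ ?_⟩
  · rintro (hPe | ⟨P, hP, hPe⟩)
    · exact eq_empty_iff_forall_notMem.mp hPe.symm (Classical.arbitrary V, z) ⟨mem_univ _, rfl⟩
    · obtain ⟨v, hv⟩ := nonempty_of_mem_partition hPi hP
      obtain ⟨w, hw⟩ := hz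
      exact eq_empty_iff_forall_notMem.mp hPe (v, w) ⟨hv, hw⟩
  · by_cases hx : x.2 = z
    · refine ⟨univ ×ˢ {z}, ⟨mem_insert _ _, mem_univ _, hx⟩, ?_⟩
      rintro _ ⟨rfl | ⟨Q, -, rfl⟩, hxQ⟩
      · rfl
      · exact absurd hx hxQ.2
    · obtain ⟨P, ⟨hP, hxP⟩, huniq⟩ := hPi.2 x.1
      refine ⟨P ×ˢ {z}ᶜ, ⟨mem_insert_of_mem _ ⟨P, hP, rfl⟩, hxP, hx⟩, ?_⟩
      rintro _ ⟨rfl | ⟨Q, hQ, rfl⟩, hxQ⟩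
      · exact absurd hxQ.2 hx
      · rw [huniq Q ⟨hQ, hxQ.1⟩]

end Setoid.IsPartition

section PartitionDim

variable {V W : Type*} {G : SimpleGraph V} {H : SimpleGraph W} {Pi : Set (Set V)}

lemma isResolvingPartition_range_singleton (hG : G.Connected) :
    IsResolvingPartition G (range fun v : V ↦ ({v} : Set V)) := by
  refine ⟨⟨?_, fun v ↦ ⟨{v}, ⟨mem_range_self v, rfl⟩, ?_⟩⟩, fun u v huv ↦ ?_⟩
  · rintro ⟨v, hv⟩
    exact singleton_ne_empty v hv
  · rintro _ ⟨⟨w, rfl⟩, hvw⟩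
    rw [hvw]
  · refine ⟨{u}, mem_range_self u, ?_⟩
    rw [distToSet_singleton, distToSet_singleton, dist_self, dist_comm]
    exact (hG.pos_dist_of_ne huv).ne

lemma partitionDim_le {Pi : Finset (Set V)} (h : IsResolvingPartition G Pi) :
    partitionDim G ≤ Pi.card :=
  Nat.sInf_le ⟨Pi, rfl, h⟩

lemma partitionDim_eq_zero [IsEmpty V] (G : SimpleGraph V) : partitionDim G = 0 :=
  Nat.eq_zero_of_le_zero <| partitionDim_le (Pi := ∅) <| by
    simp [IsResolvingPartition, Setoid.IsPartition]

lemma exists_isResolvingPartition_card_eq [Finite V] (hG : G.Connected) :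
    ∃ Pi : Finset (Set V), Pi.card = partitionDim G ∧ IsResolvingPartition G Pi := by
  classical
  have := Fintype.ofFinite V
  have hsingle : IsResolvingPartition G ↑(Finset.univ.image fun v : V ↦ ({v} : Set V)) := by
    simpa using isResolvingPartition_range_singleton hG
  exact Nat.sInf_mem (s := {n | ∃ Pi : Finset (Set V), Pi.card = n ∧ IsResolvingPartition G Pi})
    ⟨_, _, rfl, hsingle⟩

lemma IsResolvingPartition.boxProd_of_subsingleton [Subsingleton W] (hG : G.Connected)
    (hH : H.Connected) (hPi : IsResolvingPartition G Pi) :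
    IsResolvingPartition (G □ H) ((· ×ˢ (univ : Set W)) '' Pi) := by
  have := hH.nonempty
  refine ⟨hPi.1.image_prod_univ, ?_⟩
  rintro ⟨u, i⟩ ⟨v, j⟩ hne
  have huv : u ≠ v := fun h ↦ hne (by rw [h, Subsingleton.elim i j])
  obtain ⟨P, hP, hd⟩ := hPi.2 u v huv
  have hPne := Setoid.nonempty_of_mem_partition hPi.1 hP
  refine ⟨P ×ˢ univ, ⟨P, hP, rfl⟩, ?_⟩
  rwa [distToSet_boxProd hG hH _ hPne univ_nonempty, distToSet_boxProd hG hH _ hPne univ_nonempty,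
    distToSet_eq_zero_of_mem (mem_univ _), distToSet_eq_zero_of_mem (mem_univ _), add_zero,
    add_zero]

lemma IsResolvingPartition.boxProd (hG : G.Connected) (hH : H.Connected)
    (hPi : IsResolvingPartition G Pi) {z : W} (hz : Function.Injective (H.dist · z))
    (hW : ∃ w, w ≠ z) :
    IsResolvingPartition (G □ H) (insert (univ ×ˢ {z}) ((· ×ˢ {z}ᶜ) '' Pi)) := by
  have := hG.nonempty
  refine ⟨hPi.1.insert_univ_prod_singleton hW, ?_⟩
  rintro ⟨u, i⟩ ⟨v, j⟩ hne
  have hz' : ({z}ᶜ : Set W).Nonempty := hW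
  by_cases hij : i = j
  · subst hij
    obtain ⟨P, hP, hd⟩ := hPi.2 u v fun h ↦ hne (by rw [h])
    have hPne := Setoid.nonempty_of_mem_partition hPi.1 hP
    refine ⟨P ×ˢ {z}ᶜ, mem_insert_of_mem _ ⟨P, hP, rfl⟩, ?_⟩
    rw [distToSet_boxProd hG hH _ hPne hz', distToSet_boxProd hG hH _ hPne hz']
    simpa using hd
  · refine ⟨univ ×ˢ {z}, mem_insert _ _, ?_⟩
    rw [distToSet_boxProd hG hH _ univ_nonempty (singleton_nonempty z),
      distToSet_boxProd hG hH _ univ_nonempty (singleton_nonempty z),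
      distToSet_eq_zero_of_mem (mem_univ _), distToSet_eq_zero_of_mem (mem_univ _),
      distToSet_singleton, distToSet_singleton]
    simpa using hz.ne hij

theorem partitionDim_boxProd_le_add_one [Finite V] (hG : G.Connected) (hH : H.Connected)
    (z : W) (hz : Function.Injective (H.dist · z)) :
    partitionDim (G □ H) ≤ partitionDim G + 1 := by
  classical
  obtain ⟨Pi, hcard, hPi⟩ := exists_isResolvingPartition_card_eq hG
  rcases subsingleton_or_nontrivial W with hW | hW
  · calc partitionDim (G □ H) ≤ (Pi.image (· ×ˢ (univ : Set W))).card :=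
          partitionDim_le (by simpa using hPi.boxProd_of_subsingleton hG hH)
      _ ≤ partitionDim G + 1 := by have := Pi.card_image_le (f := (· ×ˢ (univ : Set W))); omega
  · calc partitionDim (G □ H) ≤ (insert (univ ×ˢ {z}) (Pi.image (· ×ˢ {z}ᶜ))).card :=
          partitionDim_le (by simpa using hPi.boxProd hG hH hz (exists_ne z))
      _ ≤ (Pi.image (· ×ˢ {z}ᶜ)).card + 1 := Finset.card_insert_le _ _
      _ ≤ partitionDim G + 1 := by have := Pi.card_image_le (f := (· ×ˢ {z}ᶜ)); omega

end PartitionDim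

theorem stmt_9_general {V : Type*} [Fintype V] (G : SimpleGraph V) (hG : G.Connected)
    (n : ℕ) :
    partitionDim (G.boxProd (SimpleGraph.pathGraph n)) ≤ partitionDim G + 1 := by
  cases n with
  | zero => simp [partitionDim_eq_zero]
  | succ m =>
    refine partitionDim_boxProd_le_add_one hG (pathGraph_connected m) 0 fun i j h ↦ ?_
    simpa [pathGraph_dist_zero, Fin.ext_iff] using h

theorem stmt_9 {V : Type*} [Fintype V] (G : SimpleGraph V) (hG : G.Connected)
    (n : ℕ) (hn : 1 ≤ n) :
    partitionDim (G.boxProd (SimpleGraph.pathGraph n)) ≤ partitionDim G + 1 :=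
  stmt_9_general G hG n
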